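/- arXiv:1006.4079 — 4 statements merged into one kernel-verified Lean document; each statement's English description precedes it below -/
import Mathlib

section
/- Let (𝔤, B) be a finite-dimensional complex quadratic Lie algebra with orthonormal basis (Xᵢ), and let v = −(1/12) Σ_{i,j,k} B(Xᵢ,[Xⱼ,Xₖ]) XᵢXⱼXₖ ∈ C(𝔤) be the cubic element. Then for every x ∈ 𝔤 one has, in C(𝔤), v·x + x·v = −(1/2) Σ_{i,j} B(x,[Xᵢ,Xⱼ]) XᵢXⱼ. Equivalently, d_v(x) + δ(x) = 0, where d_v(a) = v·a − κ(a)·v and δ is the transpose of the Lie bracket. -/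
/-!
Moving `x` across a product of three vectors in the Clifford algebra costs one polar term
`2 B(x, ·)` per factor, so `v x + x v` is a combination of three contractions of the structure
constants `B(Xᵢ, [Xⱼ, Xₖ])` against `B(x, ·)`. Invariance and symmetry of `B` make these
constants totally antisymmetric, so after relabelling the three contractions coincide, and in an
orthonormal basis `∑ₖ B(Xᵢ, [Xⱼ, Xₖ]) B(x, Xₖ) = B(x, [Xᵢ, Xⱼ])`. The constant is
`-(1/12) · 3 · 2 = -1/2`.
-/

open CliffordAlgebra

namespace CliffordAlgebra

variable {R M : Type*} [CommRing R] [AddCommGroup M] [Module R M] {Q : QuadraticForm R M}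

theorem ι_mul_ι_mul_ι_mul_ι_add_swap (a b c x : M) :
    ι Q a * ι Q b * ι Q c * ι Q x + ι Q x * (ι Q a * ι Q b * ι Q c)
      = QuadraticMap.polar Q x a • (ι Q b * ι Q c) - QuadraticMap.polar Q x b • (ι Q a * ι Q c)
          + QuadraticMap.polar Q x c • (ι Q a * ι Q b) := by
  have telescope : ι Q a * ι Q b * ι Q c * ι Q x + ι Q x * (ι Q a * ι Q b * ι Q c)
      = (ι Q x * ι Q a + ι Q a * ι Q x) * ι Q b * ι Q c
        - ι Q a * (ι Q x * ι Q b + ι Q b * ι Q x) * ι Q c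
        + ι Q a * ι Q b * (ι Q x * ι Q c + ι Q c * ι Q x) := by
    noncomm_ring
  rw [telescope, ι_mul_ι_add_swap, ι_mul_ι_add_swap, ι_mul_ι_add_swap]
  simp only [Algebra.smul_def, Algebra.commutes, mul_assoc]

end CliffordAlgebra

open Finset in
theorem sum_three_contractions_of_alternating {R A I : Type*} [CommRing R] [AddCommGroup A]
    [Module R A] [Fintype I] (φ : I → I → I → R) (hcyc : ∀ i j k, φ i j k = φ k i j)
    (hanti : ∀ i j k, φ i k j = -φ i j k) (c : I → R) (E : I → I → A) :
    ∑ i, ∑ j, ∑ k, φ i j k • (c i • E j k - c j • E i k + c k • E i j)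
      = (3 : R) • ∑ i, ∑ j, ∑ k, (φ i j k * c k) • E i j := by
  have first : ∑ i, ∑ j, ∑ k, φ i j k • c i • E j k
      = ∑ i, ∑ j, ∑ k, (φ i j k * c k) • E i j :=
    calc _ = ∑ k, ∑ i, ∑ j, φ k i j • c k • E i j := rfl
      _ = ∑ i, ∑ j, ∑ k, φ k i j • c k • E i j :=
        sum_comm.trans (sum_congr rfl fun _ _ => sum_comm)
      _ = _ := by simp_rw [← hcyc, mul_smul]
  have second : ∑ i, ∑ j, ∑ k, φ i j k • c j • E i k
      = -∑ i, ∑ j, ∑ k, (φ i j k * c k) • E i j :=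
    calc _ = ∑ i, ∑ k, ∑ j, φ i k j • c k • E i j := rfl
      _ = ∑ i, ∑ j, ∑ k, φ i k j • c k • E i j := sum_congr rfl fun _ _ => sum_comm
      _ = _ := by
        have swap : ∀ i j k, φ i k j • c k • E i j = -((φ i j k * c k) • E i j) :=
          fun i j k => by rw [hanti, neg_smul, mul_smul]
        simp_rw [swap, sum_neg_distrib]
  simp only [smul_add, smul_sub, sum_add_distrib, sum_sub_distrib, first, second, mul_smul]
  module

namespace LinearMap.BilinForm

theorem repr_eq_apply_of_orthonormal {R M I : Type*} [CommRing R] [AddCommGroup M] [Module R M]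
    [DecidableEq I] {B : LinearMap.BilinForm R M} {X : Module.Basis I R M}
    (hX : ∀ i j, B (X i) (X j) = if i = j then 1 else 0) (y : M) (k : I) :
    X.repr y k = B y (X k) := by
  have coord_eq : X.coord k = B.flip (X k) := X.ext fun i => by simp [hX, Finsupp.single_apply]
  exact LinearMap.congr_fun coord_eq y

variable {R L : Type*} [CommRing R] [LieRing L] [LieAlgebra R L] {B : LinearMap.BilinForm R L}

theorem apply_lie_cyclic (hB_symm : ∀ x y : L, B x y = B y x)
    (hB_inv : ∀ x y z : L, B ⁅x, y⁆ z + B y ⁅x, z⁆ = 0) (a b c : L) :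
    B a ⁅b, c⁆ = B c ⁅a, b⁆ := by
  rw [hB_symm, ← lie_skew a b, map_neg, eq_neg_iff_add_eq_zero, hB_inv]

theorem sum_apply_lie_basis_mul {I : Type*} [Fintype I] [DecidableEq I]
    {X : Module.Basis I R L} (hB_symm : ∀ x y : L, B x y = B y x)
    (hB_inv : ∀ x y z : L, B ⁅x, y⁆ z + B y ⁅x, z⁆ = 0)
    (hX : ∀ i j, B (X i) (X j) = if i = j then 1 else 0) (a b x : L) :
    ∑ k, B a ⁅b, X k⁆ * B x (X k) = B x ⁅a, b⁆ := by
  conv_rhs => rw [← apply_lie_cyclic hB_symm hB_inv, ← X.sum_repr x]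
  simp [lie_sum, repr_eq_apply_of_orthonormal hX, mul_comm]

end LinearMap.BilinForm

open LinearMap.BilinForm in
theorem cubic_element_bracket_general {L : Type*} [LieRing L] [LieAlgebra ℂ L]
    (B : LinearMap.BilinForm ℂ L)
    (hB_symm : ∀ x y : L, B x y = B y x)
    (hB_inv : ∀ x y z : L, B ⁅x, y⁆ z + B y ⁅x, z⁆ = 0)
    {I : Type*} [Fintype I] [DecidableEq I] (X : Module.Basis I ℂ L)
    (hX : ∀ i j, B (X i) (X j) = if i = j then 1 else 0)
    (v : CliffordAlgebra B.toQuadraticMap)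
    (hv : v = (-(1/12 : ℂ)) • ∑ i : I, ∑ j : I, ∑ k : I,
        B (X i) ⁅X j, X k⁆ •
          (ι B.toQuadraticMap (X i) * ι B.toQuadraticMap (X j) * ι B.toQuadraticMap (X k)))
    (x : L) :
    v * ι B.toQuadraticMap x + ι B.toQuadraticMap x * v
      = (-(1/2 : ℂ)) • ∑ i : I, ∑ j : I,
          B x ⁅X i, X j⁆ • (ι B.toQuadraticMap (X i) * ι B.toQuadraticMap (X j)) := by
  have polar_eq : ∀ y w, QuadraticMap.polar B.toQuadraticMap y w = 2 * B y w := fun y w => by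
    rw [LinearMap.BilinMap.polar_toQuadraticMap, hB_symm w y, two_mul]
  simp only [hv, smul_mul_assoc, mul_smul_comm, Finset.sum_mul, Finset.mul_sum, ← smul_add,
    ← Finset.sum_add_distrib, ι_mul_ι_mul_ι_mul_ι_add_swap]
  rw [sum_three_contractions_of_alternating (fun i j k => B (X i) ⁅X j, X k⁆)
    (fun i j k => apply_lie_cyclic hB_symm hB_inv _ _ _)
    (fun i j k => by rw [← lie_skew, map_neg])]
  simp only [polar_eq, mul_left_comm _ (2 : ℂ), mul_smul (2 : ℂ), ← Finset.smul_sum,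
    ← Finset.sum_smul, sum_apply_lie_basis_mul hB_symm hB_inv hX]
  module

/-- For a finite-dimensional complex quadratic Lie algebra `(𝔤, B)` with orthonormal
basis `(Xᵢ)` and cubic element
`v = -(1/12) ∑ B(Xᵢ,[Xⱼ,Xₖ]) XᵢXⱼXₖ` in the Clifford algebra of `Q(x) = B(x,x)`,
one has `v·x + x·v = -(1/2) ∑ B(x,[Xᵢ,Xⱼ]) XᵢXⱼ` for all `x ∈ 𝔤`. -/
theorem cubic_element_bracket {L : Type*} [LieRing L] [LieAlgebra ℂ L]
    [FiniteDimensional ℂ L]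
    (B : LinearMap.BilinForm ℂ L)
    (hB_symm : ∀ x y : L, B x y = B y x)
    (hB_inv : ∀ x y z : L, B ⁅x, y⁆ z + B y ⁅x, z⁆ = 0)
    (hB_nd : B.Nondegenerate)
    {I : Type*} [Fintype I] [DecidableEq I] (X : Module.Basis I ℂ L)
    (hX : ∀ i j, B (X i) (X j) = if i = j then 1 else 0)
    (v : CliffordAlgebra B.toQuadraticMap)
    (hv : v = (-(1/12 : ℂ)) • ∑ i : I, ∑ j : I, ∑ k : I,
        B (X i) ⁅X j, X k⁆ •
          (ι B.toQuadraticMap (X i) * ι B.toQuadraticMap (X j) * ι B.toQuadraticMap (X k)))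
    (x : L) :
    v * ι B.toQuadraticMap x + ι B.toQuadraticMap x * v
      = (-(1/2 : ℂ)) • ∑ i : I, ∑ j : I,
          B x ⁅X i, X j⁆ • (ι B.toQuadraticMap (X i) * ι B.toQuadraticMap (X j)) :=
  cubic_element_bracket_general B hB_symm hB_inv X hX v hv x
end

section
/- Let (𝔤, B) be a finite-dimensional complex quadratic Lie algebra with orthonormal basis (Xᵢ), and let v = −(1/12) Σ_{i,j,k} B(Xᵢ,[Xⱼ,Xₖ]) XᵢXⱼXₖ ∈ C(𝔤). Then v² lies in the center of C(𝔤); in particular v²·a = a·v² for every a ∈ C(𝔤). -/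
/-!
Put `θ(x) = ∑ᵢ Xᵢ [Xᵢ, x]` in `C(𝔤)`. Commutation with `θ(a)` is a derivation of `C(𝔤)` acting on
the generators as `4 ad a`. Since `ad a` is skew-adjoint for `B`, the Casimir tensor `∑ᵢ Xᵢ ⊗ Xᵢ`
is `ad a`-invariant; applied to `θ` itself and to `c = ∑ᵢ Xᵢ θ(Xᵢ) = 12 v`, this gives
`[θ(a), θ(b)] = 4 θ([a, b])` and `[θ(a), c] = 0`. Moreover `x c + c x = 6 θ(x)` for `x ∈ 𝔤`, so
`[c², x] = [c, x c + c x] = 0`, and an element commuting with the generators of `C(𝔤)` is central.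
-/

open CliffordAlgebra

namespace Ring

variable {A : Type*} [Ring A]

theorem lie_mul (a b c : A) : ⁅a, b * c⁆ = ⁅a, b⁆ * c + b * ⁅a, c⁆ := by
  simp only [Ring.lie_def]; noncomm_ring

theorem sum_lie {κ : Type*} (s : Finset κ) (f : κ → A) (a : A) :
    ⁅∑ i ∈ s, f i, a⁆ = ∑ i ∈ s, ⁅f i, a⁆ := by
  simp only [Ring.lie_def, Finset.sum_mul, Finset.mul_sum, Finset.sum_sub_distrib]

theorem lie_sum {κ : Type*} (s : Finset κ) (f : κ → A) (a : A) :
    ⁅a, ∑ i ∈ s, f i⁆ = ∑ i ∈ s, ⁅a, f i⁆ := by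
  simp only [Ring.lie_def, Finset.sum_mul, Finset.mul_sum, Finset.sum_sub_distrib]

end Ring

theorem commute_sq_of_commute_mul_add_mul {A : Type*} [Ring A] {a x : A}
    (h : Commute a (a * x + x * a)) : Commute (a ^ 2) x := by
  rw [Commute, SemiconjBy, ← sub_eq_zero] at h ⊢
  rw [← h]; noncomm_ring

namespace CliffordAlgebra

variable {R M : Type*} [CommRing R] [AddCommGroup M] [Module R M]

theorem mem_center_of_commute_ι {Q : QuadraticForm R M} {z : CliffordAlgebra Q}
    (hz : ∀ m, Commute z (ι Q m)) : z ∈ Subalgebra.center R (CliffordAlgebra Q) := by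
  rw [Subalgebra.mem_center_iff]
  intro a
  have ha : a ∈ Algebra.adjoin R (Set.range (ι Q)) := by rw [adjoin_range_ι]; trivial
  exact (Algebra.adjoin_le_centralizer_centralizer R _ ha z
    (by rintro _ ⟨m, rfl⟩; exact (hz m).eq.symm)).symm

variable {B : LinearMap.BilinForm R M} (hB : B.IsSymm)
include hB

local notation "ιB" => ι (LinearMap.BilinMap.toQuadraticMap B)

theorem ι_mul_ι_add_swap_of_isSymm (a b : M) :
    ιB a * ιB b + ιB b * ιB a = algebraMap R _ (2 * B a b) := by
  rw [ι_mul_ι_add_swap, LinearMap.BilinMap.polar_toQuadraticMap, hB.eq b a, two_mul]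

theorem lie_ι_mul_ι_ι (a b y : M) :
    ⁅ιB a * ιB b, ιB y⁆ = (2 * B b y) • ιB a - (2 * B a y) • ιB b := by
  have key : ⁅ιB a * ιB b, ιB y⁆ =
      ιB a * (ιB b * ιB y + ιB y * ιB b) - (ιB a * ιB y + ιB y * ιB a) * ιB b := by
    rw [Ring.lie_def]; noncomm_ring
  rw [key, ι_mul_ι_add_swap_of_isSymm hB, ι_mul_ι_add_swap_of_isSymm hB, Algebra.smul_def,
    Algebra.smul_def, Algebra.commutes, Algebra.commutes]

end CliffordAlgebra

namespace LinearMap.BilinForm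

variable {R M N : Type*} [CommRing R] [AddCommGroup M] [Module R M] [AddCommGroup N] [Module R N]
  {B : LinearMap.BilinForm R M} {I : Type*} [Fintype I] [DecidableEq I] {X : Module.Basis I R M}
  (hX : ∀ i j, B (X i) (X j) = if i = j then 1 else 0)
include hX

theorem apply_basis_eq_repr (u : M) (i : I) : B (X i) u = X.repr u i := by
  conv_lhs => rw [← X.sum_repr u]
  simp [map_sum, hX, -Module.Basis.sum_repr]

theorem sum_smul_apply_basis (g : M →ₗ[R] N) (u : M) : ∑ i, B (X i) u • g (X i) = g u := by
  simp_rw [apply_basis_eq_repr hX, ← map_smul, ← map_sum, X.sum_repr]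

theorem sum_apply_skew_add_apply_skew_eq_zero (hB : B.IsSymm) (β : M →ₗ[R] M →ₗ[R] N)
    (D : M →ₗ[R] M) (hD : ∀ a b, B (D a) b = -B a (D b)) :
    ∑ i, (β (D (X i)) (X i) + β (X i) (D (X i))) = 0 := by
  have h : ∑ i, β (D (X i)) (X i) = -∑ i, β (X i) (D (X i)) := calc
    ∑ i, β (D (X i)) (X i) = ∑ i, ∑ p, B (X p) (D (X i)) • β (X p) (X i) := by
      refine Finset.sum_congr rfl fun i _ => ?_
      simpa using (sum_smul_apply_basis hX (β.flip (X i)) (D (X i))).symm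
    _ = ∑ p, ∑ i, -(B (X i) (D (X p)) • β (X p) (X i)) := by
      rw [Finset.sum_comm]
      refine Finset.sum_congr rfl fun p _ => Finset.sum_congr rfl fun i _ => ?_
      rw [hB.eq, hD, neg_smul]
    _ = -∑ i, β (X i) (D (X i)) := by
      simp_rw [Finset.sum_neg_distrib, sum_smul_apply_basis hX]
  rw [Finset.sum_add_distrib, h, neg_add_cancel]

end LinearMap.BilinForm

section CubicElement

variable {R L : Type*} [CommRing R] [LieRing L] [LieAlgebra R L] (B : LinearMap.BilinForm R L)
  {I : Type*} [Fintype I] (X : Module.Basis I R L)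

local notation "ιB" => ι (LinearMap.BilinMap.toQuadraticMap B)

noncomputable def cliffordAd : L →ₗ[R] CliffordAlgebra B.toQuadraticMap :=
  ∑ i, LinearMap.mulLeft R (ιB (X i)) ∘ₗ ιB ∘ₗ LieAlgebra.ad R L (X i)

theorem cliffordAd_apply (x : L) : cliffordAd B X x = ∑ i, ιB (X i) * ιB ⁅X i, x⁆ := by
  simp [cliffordAd]

noncomputable def cubicElement : CliffordAlgebra B.toQuadraticMap :=
  ∑ i, ιB (X i) * cliffordAd B X (X i)

variable {B X} [DecidableEq I] (hX : ∀ i j, B (X i) (X j) = if i = j then 1 else 0)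
  (hB : B.IsSymm) (hB_inv : B.lieInvariant L)
include hX hB hB_inv

theorem sum_smul_ι_mul_ι_mul_ι :
    ∑ i, ∑ j, ∑ k, B (X i) ⁅X j, X k⁆ • (ιB (X i) * ιB (X j) * ιB (X k)) =
      -cubicElement B X := by
  rw [cubicElement, ← Finset.sum_neg_distrib]
  refine Finset.sum_congr rfl fun i _ => ?_
  rw [cliffordAd_apply, Finset.mul_sum, ← Finset.sum_neg_distrib]
  refine Finset.sum_congr rfl fun j _ => ?_
  have hk : ∀ k, B (X i) ⁅X j, X k⁆ = -B (X k) ⁅X j, X i⁆ := fun k => by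
    rw [hB.eq (X k), hB_inv, neg_neg]
  simp_rw [hk, ← mul_smul_comm, ← Finset.mul_sum, neg_smul, Finset.sum_neg_distrib,
    LinearMap.BilinForm.sum_smul_apply_basis hX ιB, mul_neg, mul_assoc]

theorem lie_cliffordAd_ι (a y : L) : ⁅cliffordAd B X a, ιB y⁆ = (4 : R) • ιB ⁅a, y⁆ := by
  have h₁ : ∑ i, (2 * B ⁅X i, a⁆ y) • ιB (X i) = (2 : R) • ιB ⁅a, y⁆ := by
    simp_rw [mul_smul, ← Finset.smul_sum, ← lie_skew _ a, LinearMap.map_neg₂, hB_inv _ _ y,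
      neg_neg]
    rw [LinearMap.BilinForm.sum_smul_apply_basis hX]
  have h₂ : ∑ i, (2 * B (X i) y) • ιB ⁅X i, a⁆ = -((2 : R) • ιB ⁅a, y⁆) := by
    simp_rw [mul_smul, ← Finset.smul_sum, ← lie_skew _ a, map_neg, smul_neg,
      Finset.sum_neg_distrib]
    have h := LinearMap.BilinForm.sum_smul_apply_basis hX (ιB ∘ₗ LieAlgebra.ad R L a) y
    simp only [LinearMap.comp_apply, LieAlgebra.ad_apply] at h
    rw [h, smul_neg]
  rw [cliffordAd_apply, Ring.sum_lie]
  simp_rw [lie_ι_mul_ι_ι hB]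
  rw [Finset.sum_sub_distrib, h₁, h₂]
  module

theorem lie_cliffordAd_cliffordAd (a b : L) :
    ⁅cliffordAd B X a, cliffordAd B X b⁆ = (4 : R) • cliffordAd B X ⁅a, b⁆ := by
  let β : L →ₗ[R] L →ₗ[R] CliffordAlgebra B.toQuadraticMap :=
    LinearMap.mk₂ R (fun u w => ιB u * ιB ⁅w, b⁆) (by simp [add_mul]) (by simp)
      (by simp [mul_add]) (by simp)
  have hβ := LinearMap.BilinForm.sum_apply_skew_add_apply_skew_eq_zero hX hB β
    (LieAlgebra.ad R L a) (hB_inv a)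
  simp only [β, LinearMap.mk₂_apply, LieAlgebra.ad_apply] at hβ
  rw [← sub_eq_zero]
  calc ⁅cliffordAd B X a, cliffordAd B X b⁆ - (4 : R) • cliffordAd B X ⁅a, b⁆
      = (4 : R) • ∑ i, (ιB ⁅a, X i⁆ * ιB ⁅X i, b⁆ + ιB (X i) * ιB ⁅⁅a, X i⁆, b⁆) := by
        rw [cliffordAd_apply B X b, cliffordAd_apply B X ⁅a, b⁆, Ring.lie_sum]
        simp_rw [Ring.lie_mul, lie_cliffordAd_ι hX hB hB_inv, Finset.smul_sum,
          ← Finset.sum_sub_distrib]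
        refine Finset.sum_congr rfl fun i _ => ?_
        rw [leibniz_lie a, map_add]
        simp only [smul_mul_assoc, mul_smul_comm, mul_add, smul_add]
        abel
    _ = 0 := by rw [hβ, smul_zero]

theorem lie_cliffordAd_cubicElement (a : L) : ⁅cliffordAd B X a, cubicElement B X⁆ = 0 := by
  have hβ := LinearMap.BilinForm.sum_apply_skew_add_apply_skew_eq_zero hX hB
    ((LinearMap.mul R _).compl₁₂ ιB (cliffordAd B X)) (LieAlgebra.ad R L a) (hB_inv a)
  simp only [LieAlgebra.ad_apply, LinearMap.compl₁₂_apply, LinearMap.mul_apply_apply] at hβ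
  rw [cubicElement, Ring.lie_sum]
  simp_rw [Ring.lie_mul, lie_cliffordAd_ι hX hB hB_inv, lie_cliffordAd_cliffordAd hX hB hB_inv,
    smul_mul_assoc, mul_smul_comm, ← smul_add, ← Finset.smul_sum, hβ, smul_zero]

theorem ι_mul_cubicElement_add (x : L) :
    ιB x * cubicElement B X + cubicElement B X * ιB x = (6 : R) • cliffordAd B X x := by
  have anticomm : ∀ a b : CliffordAlgebra B.toQuadraticMap,
      ιB x * (a * b) + a * b * ιB x = (ιB x * a + a * ιB x) * b + a * ⁅b, ιB x⁆ := by
    intro a b; rw [Ring.lie_def]; noncomm_ring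
  have h := LinearMap.BilinForm.sum_smul_apply_basis hX (cliffordAd B X) x
  rw [cubicElement, Finset.mul_sum, Finset.sum_mul, ← Finset.sum_add_distrib]
  simp_rw [anticomm, ι_mul_ι_add_swap_of_isSymm hB, lie_cliffordAd_ι hX hB hB_inv,
    ← Algebra.smul_def, mul_smul_comm, Finset.sum_add_distrib, ← Finset.smul_sum,
    ← cliffordAd_apply, mul_smul, hB.eq x, ← Finset.smul_sum, h]
  module

theorem cubicElement_sq_mem_center :
    cubicElement B X ^ 2 ∈ Subalgebra.center R (CliffordAlgebra B.toQuadraticMap) := by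
  refine mem_center_of_commute_ι fun x => commute_sq_of_commute_mul_add_mul ?_
  have h : Commute (cliffordAd B X x) (cubicElement B X) :=
    sub_eq_zero.mp (lie_cliffordAd_cubicElement hX hB hB_inv x)
  rw [add_comm, ι_mul_cubicElement_add hX hB hB_inv]
  exact h.symm.smul_right _

end CubicElement

theorem cubic_element_sq_mem_center_general {L : Type*} [LieRing L] [LieAlgebra ℂ L]
    (B : LinearMap.BilinForm ℂ L)
    (hB_symm : ∀ x y : L, B x y = B y x)
    (hB_inv : ∀ x y z : L, B ⁅x, y⁆ z + B y ⁅x, z⁆ = 0)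
    {I : Type*} [Fintype I] [DecidableEq I] (X : Module.Basis I ℂ L)
    (hX : ∀ i j, B (X i) (X j) = if i = j then 1 else 0)
    (v : CliffordAlgebra B.toQuadraticMap)
    (hv : v = (-(1/12 : ℂ)) • ∑ i : I, ∑ j : I, ∑ k : I,
        B (X i) ⁅X j, X k⁆ •
          (ι B.toQuadraticMap (X i) * ι B.toQuadraticMap (X j) * ι B.toQuadraticMap (X k))) :
    v ^ 2 ∈ Subalgebra.center ℂ (CliffordAlgebra B.toQuadraticMap) := by
  have hB : B.IsSymm := ⟨hB_symm⟩
  have hB_inv' : B.lieInvariant L := fun x y z => eq_neg_of_add_eq_zero_left (hB_inv x y z)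
  rw [hv, sum_smul_ι_mul_ι_mul_ι hX hB hB_inv', neg_smul_neg, smul_pow]
  exact Subalgebra.smul_mem _ (cubicElement_sq_mem_center hX hB hB_inv') _

/-- For a finite-dimensional complex quadratic Lie algebra `(𝔤, B)` with orthonormal
basis `(Xᵢ)`, the square of the cubic element
`v = -(1/12) ∑ B(Xᵢ,[Xⱼ,Xₖ]) XᵢXⱼXₖ` lies in the center of the Clifford algebra. -/
theorem cubic_element_sq_mem_center {L : Type*} [LieRing L] [LieAlgebra ℂ L]
    [FiniteDimensional ℂ L]
    (B : LinearMap.BilinForm ℂ L)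
    (hB_symm : ∀ x y : L, B x y = B y x)
    (hB_inv : ∀ x y z : L, B ⁅x, y⁆ z + B y ⁅x, z⁆ = 0)
    (hB_nd : B.Nondegenerate)
    {I : Type*} [Fintype I] [DecidableEq I] (X : Module.Basis I ℂ L)
    (hX : ∀ i j, B (X i) (X j) = if i = j then 1 else 0)
    (v : CliffordAlgebra B.toQuadraticMap)
    (hv : v = (-(1/12 : ℂ)) • ∑ i : I, ∑ j : I, ∑ k : I,
        B (X i) ⁅X j, X k⁆ •
          (ι B.toQuadraticMap (X i) * ι B.toQuadraticMap (X j) * ι B.toQuadraticMap (X k))) :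
    v ^ 2 ∈ Subalgebra.center ℂ (CliffordAlgebra B.toQuadraticMap) :=
  cubic_element_sq_mem_center_general B hB_symm hB_inv X hX v hv
end

section
/- Let (𝔤, B) be a finite-dimensional complex quadratic Lie algebra with orthonormal basis (Xᵢ), v = −(1/12) Σ_{i,j,k} B(Xᵢ,[Xⱼ,Xₖ]) XᵢXⱼXₖ ∈ C(𝔤) the cubic element, and define in the algebra U(𝔤) ⊗ C(𝔤) the Kostant Dirac operator D_𝔤 = Σᵢ Xᵢ ⊗ Xᵢ + 1 ⊗ v and the Casimir element Ω_𝔤 = Σᵢ Xᵢ² ∈ U(𝔤). Then D_𝔤² = Ω_𝔤 ⊗ 1 + 1 ⊗ v²; in other words, the first-order term in the square of the Dirac operator vanishes. -/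
open CliffordAlgebra TensorProduct

/-!
Write `D = S + 1 ⊗ v` with `S = ∑ Xᵢ ⊗ Xᵢ`. Because the `Xᵢ` anticommute in `C(𝔤)`,
`S² = Ω ⊗ 1 + ½ ∑ᵢⱼ [Xᵢ, Xⱼ] ⊗ XᵢXⱼ`, and expanding `[Xᵢ, Xⱼ]` in the orthonormal basis turns the
second term into `½ ∑ c_kij X_k ⊗ XᵢXⱼ` with `c_kij = B(X_k, [Xᵢ, Xⱼ])`. Invariance makes `c`
totally antisymmetric, so in `C(𝔤)` the anticommutator of `X_l` with `v` is `-½ ∑ c_ljk XⱼX_k`,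
and the cross term `S (1 ⊗ v) + (1 ⊗ v) S` cancels the second term exactly.
-/

theorem mul_mul_mul_add_mul_mul_mul {A : Type*} [Ring A] (x a b c : A) :
    x * (a * b * c) + a * b * c * x =
      (x * a + a * x) * (b * c) - a * (x * b + b * x) * c + a * b * (x * c + c * x) := by
  noncomm_ring

section Anticommuting

variable {R A : Type*} [CommRing R] [Ring A] [Algebra R A] {I : Type*} [Fintype I] [DecidableEq I]
  {e : I → A}

theorem anticomm_sum_cubic (he : ∀ i j, e i * e j + e j * e i = if i = j then 2 else 0)
    {c : I → I → I → R} (hc₁₂ : ∀ i j k, c j i k = -c i j k) (hc₂₃ : ∀ i j k, c i k j = -c i j k)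
    (l : I) :
    e l * (∑ i, ∑ j, ∑ k, c i j k • (e i * e j * e k)) +
        (∑ i, ∑ j, ∑ k, c i j k • (e i * e j * e k)) * e l =
      (6 : R) • ∑ j, ∑ k, c l j k • (e j * e k) := by
  have hterm : ∀ i j k, e l * (e i * e j * e k) + e i * e j * e k * e l =
      (if l = i then (2 : R) • (e j * e k) else 0) - (if l = j then (2 : R) • (e i * e k) else 0) +
        (if l = k then (2 : R) • (e i * e j) else 0) := by
    intro i j k
    rw [mul_mul_mul_add_mul_mul_mul, he, he, he]
    simp only [two_smul]
    split_ifs <;> noncomm_ring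
  simp only [Finset.mul_sum, Finset.sum_mul, mul_smul_comm, smul_mul_assoc,
    ← Finset.sum_add_distrib, ← smul_add, hterm]
  simp only [smul_add, smul_sub, smul_ite, smul_zero, Finset.sum_add_distrib,
    Finset.sum_sub_distrib, Finset.sum_ite_eq, Finset.sum_ite_irrel, Finset.sum_const_zero,
    Finset.mem_univ, if_true]
  have hc₁ : ∀ i k, c i l k = -c l i k := fun i k => hc₁₂ l i k
  have hc₂ : ∀ i j, c i j l = c l i j := fun i j => by rw [hc₂₃ i l j, hc₁₂ l i j, neg_neg]
  simp only [hc₁, hc₂, neg_smul, Finset.sum_neg_distrib, smul_comm _ (2 : R),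
    ← Finset.smul_sum]
  module

end Anticommuting

section TensorSquare

variable {R A C : Type*} [CommRing R] [Ring A] [Algebra R A] [Ring C] [Algebra R C]
  {I : Type*} [Fintype I] (u : I → A) {e : I → C}

theorem sum_tmul_mul_one_tmul_add (w : C) :
    (∑ i, u i ⊗ₜ[R] e i) * (1 ⊗ₜ w) + (1 ⊗ₜ w) * (∑ i, u i ⊗ₜ[R] e i) =
      ∑ i, u i ⊗ₜ (e i * w + w * e i) := by
  simp only [Finset.sum_mul, Finset.mul_sum, Algebra.TensorProduct.tmul_mul_tmul, mul_one, one_mul,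
    ← Finset.sum_add_distrib, tmul_add]

theorem sum_tmul_sq [DecidableEq I] [Invertible (2 : R)]
    (he : ∀ i j, e i * e j + e j * e i = if i = j then 2 else 0) :
    (∑ i, u i ⊗ₜ[R] e i) ^ 2 =
      (∑ i, u i ^ 2) ⊗ₜ 1 + ⅟(2 : R) • ∑ i, ∑ j, (u i * u j - u j * u i) ⊗ₜ (e i * e j) := by
  have hsq : (∑ i, u i ⊗ₜ[R] e i) ^ 2 = ∑ i, ∑ j, (u i * u j) ⊗ₜ (e i * e j) := by
    simp only [sq, Finset.sum_mul, Finset.mul_sum, Algebra.TensorProduct.tmul_mul_tmul]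
    exact Finset.sum_comm
  have hpair : ∀ i j, (u i * u j) ⊗ₜ[R] (e i * e j) + (u j * u i) ⊗ₜ[R] (e j * e i) =
      (u i * u j - u j * u i) ⊗ₜ (e i * e j) + (u j * u i) ⊗ₜ (if i = j then 2 else 0) := by
    intro i j
    rw [← he i j, tmul_add, sub_tmul]
    abel
  have hdouble : (2 : R) • ∑ i, ∑ j, (u i * u j) ⊗ₜ[R] (e i * e j) =
      (2 : R) • (∑ i, u i ^ 2) ⊗ₜ 1 + ∑ i, ∑ j, (u i * u j - u j * u i) ⊗ₜ (e i * e j) := by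
    rw [two_smul]
    nth_rw 2 [Finset.sum_comm]
    simp only [← Finset.sum_add_distrib, hpair]
    simp only [Finset.sum_add_distrib, tmul_ite, Finset.sum_ite_eq, Finset.mem_univ, if_true]
    rw [add_comm, ofNat_smul_eq_nsmul, sum_tmul, Finset.smul_sum]
    congr 1
    refine Finset.sum_congr rfl fun i _ => ?_
    rw [sq, ← one_add_one_eq_two, tmul_add, two_nsmul]
  calc (∑ i, u i ⊗ₜ[R] e i) ^ 2
        = ⅟(2 : R) • (2 : R) • ∑ i, ∑ j, (u i * u j) ⊗ₜ[R] (e i * e j) := by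
        rw [smul_smul, invOf_mul_self, one_smul, hsq]
    _ = _ := by rw [hdouble, smul_add, smul_smul, invOf_mul_self, one_smul]

theorem sq_sum_tmul_add_one_tmul [DecidableEq I] [Invertible (2 : R)]
    (he : ∀ i j, e i * e j + e j * e i = if i = j then 2 else 0) {c : I → I → I → R}
    (hu : ∀ i j, u i * u j - u j * u i = ∑ k, c k i j • u k) {w : C}
    (hw : ∀ l, e l * w + w * e l = -⅟(2 : R) • ∑ j, ∑ k, c l j k • (e j * e k)) :
    (∑ i, u i ⊗ₜ[R] e i + 1 ⊗ₜ w) ^ 2 = (∑ i, u i ^ 2) ⊗ₜ 1 + 1 ⊗ₜ (w ^ 2) := by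
  have hexpand : ∀ S T : A ⊗[R] C, (S + T) ^ 2 = S ^ 2 + (S * T + T * S) + T ^ 2 := by
    intro S T; noncomm_ring
  have hreindex : ∑ i, ∑ j, (u i * u j - u j * u i) ⊗ₜ[R] (e i * e j) =
      ∑ l, u l ⊗ₜ[R] ∑ j, ∑ k, c l j k • (e j * e k) := by
    simp only [hu, sum_tmul, tmul_sum, smul_tmul]
    exact (Finset.sum_congr rfl fun _ _ => Finset.sum_comm).trans Finset.sum_comm
  rw [hexpand, sum_tmul_sq u he, sum_tmul_mul_one_tmul_add, sq (1 ⊗ₜ w),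
    Algebra.TensorProduct.tmul_mul_tmul, one_mul, ← sq, hreindex]
  simp only [hw, neg_smul, tmul_neg, tmul_smul, Finset.sum_neg_distrib, ← Finset.smul_sum]
  abel

end TensorSquare

theorem bilinForm_apply_lie_swap {R L : Type*} [CommRing R] [LieRing L] [LieAlgebra R L]
    {B : LinearMap.BilinForm R L} (hB : ∀ x y z : L, B ⁅x, y⁆ z + B y ⁅x, z⁆ = 0) (x y z : L) :
    B y ⁅x, z⁆ = -B x ⁅y, z⁆ := by
  have h := hB y x z
  rw [← lie_skew, map_neg, LinearMap.neg_apply] at h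
  linear_combination hB x y z + h

theorem Module.Basis.sum_bilinForm_smul {R M I : Type*} [CommRing R] [AddCommGroup M]
    [Module R M] [Fintype I] [DecidableEq I] {B : LinearMap.BilinForm R M} (X : Module.Basis I R M)
    (hX : ∀ i j, B (X i) (X j) = if i = j then 1 else 0) (y : M) :
    ∑ i, B (X i) y • X i = y := by
  have hrepr : ∀ i, B (X i) y = X.repr y i := fun i => by
    conv_lhs => rw [← X.sum_repr y]
    simp only [map_sum, map_smul, hX, smul_eq_mul, mul_ite, mul_one, mul_zero, Finset.sum_ite_eq,
      Finset.mem_univ, if_true]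
  simp only [hrepr, X.sum_repr]

theorem UniversalEnvelopingAlgebra.ι_mul_ι_sub_ι_mul_ι {R L : Type*} [CommRing R] [LieRing L]
    [LieAlgebra R L] (x y : L) :
    ι R x * ι R y - ι R y * ι R x = ι R ⁅x, y⁆ := by
  let := LieRing.ofAssociativeRing (A := UniversalEnvelopingAlgebra R L)
  rw [LieHom.map_lie, Ring.lie_def]

theorem CliffordAlgebra.ι_mul_ι_add_swap_of_orthonormal {R M I : Type*} [CommRing R]
    [AddCommGroup M] [Module R M] [DecidableEq I] {B : LinearMap.BilinForm R M} {X : I → M}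
    (hX : ∀ i j, B (X i) (X j) = if i = j then 1 else 0) (i j : I) :
    ι B.toQuadraticMap (X i) * ι B.toQuadraticMap (X j) +
        ι B.toQuadraticMap (X j) * ι B.toQuadraticMap (X i) = if i = j then 2 else 0 := by
  rw [ι_mul_ι_add_swap, LinearMap.BilinMap.polar_toQuadraticMap, hX, hX]
  split_ifs with h h' <;> simp_all [one_add_one_eq_two, map_ofNat]

theorem dirac_sq_eq_casimir_add_cubic_sq_general {L : Type*} [LieRing L] [LieAlgebra ℂ L]
    (B : LinearMap.BilinForm ℂ L)
    (hB_inv : ∀ x y z : L, B ⁅x, y⁆ z + B y ⁅x, z⁆ = 0)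
    {I : Type*} [Fintype I] [DecidableEq I] (X : Module.Basis I ℂ L)
    (hX : ∀ i j, B (X i) (X j) = if i = j then 1 else 0)
    (v : CliffordAlgebra B.toQuadraticMap)
    (hv : v = (-(1/12 : ℂ)) • ∑ i : I, ∑ j : I, ∑ k : I,
        B (X i) ⁅X j, X k⁆ •
          (ι B.toQuadraticMap (X i) * ι B.toQuadraticMap (X j) * ι B.toQuadraticMap (X k)))
    (D : UniversalEnvelopingAlgebra ℂ L ⊗[ℂ] CliffordAlgebra B.toQuadraticMap)
    (hD : D = ∑ i : I,
        (UniversalEnvelopingAlgebra.ι ℂ (X i)) ⊗ₜ[ℂ] (ι B.toQuadraticMap (X i))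
        + 1 ⊗ₜ[ℂ] v)
    (Ω : UniversalEnvelopingAlgebra ℂ L)
    (hΩ : Ω = ∑ i : I, (UniversalEnvelopingAlgebra.ι ℂ (X i)) ^ 2) :
    D ^ 2 = Ω ⊗ₜ[ℂ] 1 + 1 ⊗ₜ[ℂ] (v ^ 2) := by
  have he := ι_mul_ι_add_swap_of_orthonormal hX
  have hu : ∀ i j, UniversalEnvelopingAlgebra.ι ℂ (X i) * UniversalEnvelopingAlgebra.ι ℂ (X j) -
      UniversalEnvelopingAlgebra.ι ℂ (X j) * UniversalEnvelopingAlgebra.ι ℂ (X i) =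
        ∑ k, B (X k) ⁅X i, X j⁆ • UniversalEnvelopingAlgebra.ι ℂ (X k) := fun i j => by
    rw [UniversalEnvelopingAlgebra.ι_mul_ι_sub_ι_mul_ι]
    conv_lhs => rw [← X.sum_bilinForm_smul hX ⁅X i, X j⁆]
    simp only [map_sum, map_smul]
  have hw : ∀ l, ι B.toQuadraticMap (X l) * v + v * ι B.toQuadraticMap (X l) =
      -⅟(2 : ℂ) • ∑ j, ∑ k,
        B (X l) ⁅X j, X k⁆ • (ι B.toQuadraticMap (X j) * ι B.toQuadraticMap (X k)) := by
    intro l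
    rw [hv, mul_smul_comm, smul_mul_assoc, ← smul_add,
      anticomm_sum_cubic he (c := fun i j k => B (X i) ⁅X j, X k⁆)
        (fun i j k => bilinForm_apply_lie_swap hB_inv _ _ _)
        (fun i j k => by rw [← lie_skew, map_neg]), smul_smul]
    norm_num [invOf_eq_inv]
  rw [hD, hΩ]
  exact sq_sum_tmul_add_one_tmul _ he hu hw

/-- Kostant Dirac operator, case `𝔥 = 0`, without identifying `v²` as a scalar:
`D_𝔤² = Ω_𝔤 ⊗ 1 + 1 ⊗ v²` in `U(𝔤) ⊗ C(𝔤)`; the first-order term vanishes. -/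
theorem dirac_sq_eq_casimir_add_cubic_sq {L : Type*} [LieRing L] [LieAlgebra ℂ L]
    [FiniteDimensional ℂ L]
    (B : LinearMap.BilinForm ℂ L)
    (hB_symm : ∀ x y : L, B x y = B y x)
    (hB_inv : ∀ x y z : L, B ⁅x, y⁆ z + B y ⁅x, z⁆ = 0)
    (hB_nd : B.Nondegenerate)
    {I : Type*} [Fintype I] [DecidableEq I] (X : Module.Basis I ℂ L)
    (hX : ∀ i j, B (X i) (X j) = if i = j then 1 else 0)
    (v : CliffordAlgebra B.toQuadraticMap)
    (hv : v = (-(1/12 : ℂ)) • ∑ i : I, ∑ j : I, ∑ k : I,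
        B (X i) ⁅X j, X k⁆ •
          (ι B.toQuadraticMap (X i) * ι B.toQuadraticMap (X j) * ι B.toQuadraticMap (X k)))
    (D : UniversalEnvelopingAlgebra ℂ L ⊗[ℂ] CliffordAlgebra B.toQuadraticMap)
    (hD : D = ∑ i : I,
        (UniversalEnvelopingAlgebra.ι ℂ (X i)) ⊗ₜ[ℂ] (ι B.toQuadraticMap (X i))
        + 1 ⊗ₜ[ℂ] v)
    (Ω : UniversalEnvelopingAlgebra ℂ L)
    (hΩ : Ω = ∑ i : I, (UniversalEnvelopingAlgebra.ι ℂ (X i)) ^ 2) :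
    D ^ 2 = Ω ⊗ₜ[ℂ] 1 + 1 ⊗ₜ[ℂ] (v ^ 2) :=
  dirac_sq_eq_casimir_add_cubic_sq_general B hB_inv X hX v hv D hD Ω hΩ
end

section
/- Decomposition lemma. Let (𝔤, 𝔥, B) be a complex quadratic pair with orthonormal bases (Xᵢ) of 𝔥^⊥ and (Yⱼ) of 𝔥, so that (Xᵢ) ∪ (Yⱼ) is an orthonormal basis of 𝔤. Let φ : C(𝔥^⊥) → C(𝔤) and ψ : C(𝔥) → C(𝔤) be the algebra homomorphisms induced by the isometric inclusions 𝔥^⊥ ↪ 𝔤 and 𝔥 ↪ 𝔤. In U(𝔤) ⊗ C(𝔤), let D_𝔤 = Σᵢ Xᵢ ⊗ Xᵢ + Σⱼ Yⱼ ⊗ Yⱼ + 1 ⊗ v_𝔤 with v_𝔤 the cubic element of 𝔤, let D' = Σᵢ Xᵢ ⊗ φ(Xᵢ) + 1 ⊗ φ(v_{𝔤/𝔥}) with v_{𝔤/𝔥} = −(1/12) Σ_{i,j,k} B(Xᵢ,[Xⱼ,Xₖ]) XᵢXⱼXₖ ∈ C(𝔥^⊥), and let D'' = Σⱼ (Yⱼ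 ⊗ 1 + 1 ⊗ φ(ν(Yⱼ)))·(1 ⊗ ψ(Yⱼ)) + 1 ⊗ ψ(v_𝔥), where ν(y) = (1/4) Σᵢ [y,Xᵢ]·Xᵢ ∈ C(𝔥^⊥) and v_𝔥 = −(1/12) Σ_{j,k,l} B(Yⱼ,[Yₖ,Yₗ]) YⱼYₖYₗ ∈ C(𝔥). Then D_𝔤 = D' + D''. -/
open CliffordAlgebra TensorProduct

/-!
Multiplying out `D''`, the identity reduces to one in `C(𝔤)`:
`v_𝔤 = φ(v_{𝔤/𝔥}) + Σⱼ φ(ν(Yⱼ)) Yⱼ + ψ(v_𝔥)`.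
Split the cubic sum of the basis `X ∪ Y` into eight blocks according to which slots carry an
`X` and which a `Y`. The blocks with two `Y`s vanish since `[𝔥, 𝔥^⊥] ⊆ 𝔥^⊥ ⊥ 𝔥`. By
invariance of `B` and anticommutation of orthogonal vectors, the three blocks with one `Y` all
equal `Σ B(Xₖ,[Xₗ,Yⱼ]) XₖXₗYⱼ`; expanding `[Yⱼ,Xᵢ]` in the orthonormal basis `X` shows that
`Σⱼ φ(ν(Yⱼ)) Yⱼ` is `-1/4` of that block, which matches `3 · (-1/12)`.
-/

/-- The quadratic form `x ↦ B(x,x)` restricted to a subspace `W`. -/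
noncomputable def restrictedQF {L : Type*} [AddCommGroup L] [Module ℂ L]
    (B : LinearMap.BilinForm ℂ L) (W : Submodule ℂ L) : QuadraticForm ℂ W :=
  B.toQuadraticMap.comp W.subtype

/-- The inclusion `W ↪ L` as an isometry of quadratic forms. -/
noncomputable def inclIsometry {L : Type*} [AddCommGroup L] [Module ℂ L]
    (B : LinearMap.BilinForm ℂ L) (W : Submodule ℂ L) :
    (restrictedQF B W) →qᵢ B.toQuadraticMap :=
  { toLinearMap := W.subtype
    map_app' := fun _ => rfl }

theorem inclIsometry_apply {L : Type*} [AddCommGroup L] [Module ℂ L]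
    (B : LinearMap.BilinForm ℂ L) (W : Submodule ℂ L) (x : W) :
    inclIsometry B W x = x :=
  rfl

theorem Submodule.coe_eq_sum_apply_smul_of_orthonormal {R L κ : Type*} [CommRing R]
    [AddCommGroup L] [Module R L] [Fintype κ] [DecidableEq κ] (B : LinearMap.BilinForm R L)
    {W : Submodule R L} (X : Module.Basis κ R W)
    (hX : ∀ i j, B (X i : L) (X j : L) = if i = j then 1 else 0) (z : W) :
    (z : L) = ∑ k, B (X k : L) z • (X k : L) := by
  have hz : (z : L) = ∑ k, X.repr z k • (X k : L) := by
    conv_lhs => rw [← X.sum_repr z]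
    simp only [Submodule.coe_sum, Submodule.coe_smul]
  have hrepr : ∀ k, B (X k : L) z = X.repr z k := fun k => by
    simp [hz, map_sum, hX]
  simp only [hrepr, ← hz]

namespace CliffordAlgebra

variable {R L : Type*} [CommRing R] [LieRing L] [Module R L]

noncomputable def cubicTerm (B : LinearMap.BilinForm R L) (a b c : L) :
    CliffordAlgebra B.toQuadraticMap :=
  B a ⁅b, c⁆ • (ι B.toQuadraticMap a * ι B.toQuadraticMap b * ι B.toQuadraticMap c)

/-- `cubicSum B f f f` is `-12` times the cubic element of the family `f`. -/
noncomputable def cubicSum (B : LinearMap.BilinForm R L) {α β γ : Type*} [Fintype α] [Fintype β]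
    [Fintype γ] (f : α → L) (g : β → L) (h : γ → L) : CliffordAlgebra B.toQuadraticMap :=
  ∑ a, ∑ b, ∑ c, cubicTerm B (f a) (g b) (h c)

variable {B : LinearMap.BilinForm R L}

theorem ι_mul_ι_comm_of_apply_eq_zero (hB : B.IsSymm) {a b : L} (h : B a b = 0) :
    ι B.toQuadraticMap a * ι B.toQuadraticMap b = -(ι B.toQuadraticMap b * ι B.toQuadraticMap a) :=
  ι_mul_ι_comm_of_isOrtho <| by
    rw [QuadraticMap.isOrtho_def]
    simp [h, hB.eq b a]

theorem apply_lie_cycle (hB : B.IsSymm) (hinv : B.lieInvariant L) (a b c : L) :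
    B a ⁅b, c⁆ = B b ⁅c, a⁆ := by
  rw [hB.eq, ← lie_skew, map_neg, LinearMap.neg_apply, hinv, neg_neg]

theorem cubicTerm_cycle (hB : B.IsSymm) (hinv : B.lieInvariant L) {y a b : L}
    (hya : B y a = 0) (hyb : B y b = 0) :
    cubicTerm B y a b = cubicTerm B a b y := by
  rw [cubicTerm, cubicTerm, apply_lie_cycle hB hinv, ι_mul_ι_comm_of_apply_eq_zero hB hya,
    neg_mul, mul_assoc, ι_mul_ι_comm_of_apply_eq_zero hB hyb, mul_neg, neg_neg, mul_assoc]

theorem cubicTerm_swap_right (hB : B.IsSymm) {a b y : L} (hyb : B y b = 0) :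
    cubicTerm B a y b = cubicTerm B a b y := by
  rw [cubicTerm, cubicTerm, ← lie_skew, map_neg, mul_assoc,
    ι_mul_ι_comm_of_apply_eq_zero hB hyb, mul_neg, neg_smul, smul_neg, neg_neg, mul_assoc]

variable {α β γ δ : Type*} [Fintype α] [Fintype β] [Fintype γ] [Fintype δ]

theorem cubicSum_sumElim_left (f : α → L) (f' : δ → L) (g : β → L) (h : γ → L) :
    cubicSum B (Sum.elim f f') g h = cubicSum B f g h + cubicSum B f' g h := by
  simp only [cubicSum, Fintype.sum_sum_type, Sum.elim_inl, Sum.elim_inr]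

theorem cubicSum_sumElim_middle (f : α → L) (g : β → L) (g' : δ → L) (h : γ → L) :
    cubicSum B f (Sum.elim g g') h = cubicSum B f g h + cubicSum B f g' h := by
  simp only [cubicSum, Fintype.sum_sum_type, Sum.elim_inl, Sum.elim_inr, Finset.sum_add_distrib]

theorem cubicSum_sumElim_right (f : α → L) (g : β → L) (h : γ → L) (h' : δ → L) :
    cubicSum B f g (Sum.elim h h') = cubicSum B f g h + cubicSum B f g h' := by
  simp only [cubicSum, Fintype.sum_sum_type, Sum.elim_inl, Sum.elim_inr, Finset.sum_add_distrib]

theorem cubicSum_eq_sum_right (f : α → L) (g : β → L) (h : γ → L) :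
    cubicSum B f g h = ∑ c, ∑ a, ∑ b, cubicTerm B (f a) (g b) (h c) :=
  (Finset.sum_congr rfl fun _ _ => Finset.sum_comm).trans Finset.sum_comm

theorem cubicSum_eq_zero {f : α → L} {g : β → L} {h : γ → L}
    (hfgh : ∀ a b c, B (f a) ⁅g b, h c⁆ = 0) : cubicSum B f g h = 0 :=
  Finset.sum_eq_zero fun a _ => Finset.sum_eq_zero fun b _ => Finset.sum_eq_zero fun c _ => by
    rw [cubicTerm, hfgh, zero_smul]

theorem cubicSum_sumElim (hB : B.IsSymm) (hinv : B.lieInvariant L) (x : α → L) (y : β → L)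
    (hyx : ∀ a b, B (y b) (x a) = 0) (hlie : ∀ a b b', B (y b) ⁅y b', x a⁆ = 0) :
    cubicSum B (Sum.elim x y) (Sum.elim x y) (Sum.elim x y)
      = cubicSum B x x x + 3 • cubicSum B x x y + cubicSum B y y y := by
  have hxyy : cubicSum B x y y = 0 := cubicSum_eq_zero fun a b b' => by
    rw [← neg_eq_zero, ← hinv, hB.eq, hlie]
  have hyxy : cubicSum B y x y = 0 := cubicSum_eq_zero fun b a b' => by
    rw [← lie_skew, map_neg, hlie, neg_zero]
  have hyyx : cubicSum B y y x = 0 := cubicSum_eq_zero fun b b' a => hlie a b b'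
  have hyxx : cubicSum B y x x = cubicSum B x x y := by
    rw [cubicSum_eq_sum_right x x y]
    exact Finset.sum_congr rfl fun b _ => Finset.sum_congr rfl fun a _ =>
      Finset.sum_congr rfl fun a' _ => cubicTerm_cycle hB hinv (hyx a b) (hyx a' b)
  have hxyx : cubicSum B x y x = cubicSum B x x y :=
    Finset.sum_congr rfl fun a _ => (Finset.sum_comm).trans <| Finset.sum_congr rfl fun a' _ =>
      Finset.sum_congr rfl fun b _ => cubicTerm_swap_right hB (hyx a' b)
  simp only [cubicSum_sumElim_left, cubicSum_sumElim_middle, cubicSum_sumElim_right,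
    hxyy, hyxy, hyyx, hyxx, hxyx]
  abel

theorem sum_ι_lie_mul_ι_mul_ι (x : α → L) (y : L)
    (hexp : ∀ a, ⁅y, x a⁆ = ∑ a', B (x a') ⁅y, x a⁆ • x a') :
    (∑ a, ι B.toQuadraticMap ⁅y, x a⁆ * ι B.toQuadraticMap (x a)) * ι B.toQuadraticMap y
      = -∑ a, ∑ a', cubicTerm B (x a) (x a') y := by
  have hι : ∀ a, ι B.toQuadraticMap ⁅y, x a⁆
      = ∑ a', B (x a') ⁅y, x a⁆ • ι B.toQuadraticMap (x a') := fun a => by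
    conv_lhs => rw [hexp a]
    simp only [map_sum, map_smul]
  calc (∑ a, ι B.toQuadraticMap ⁅y, x a⁆ * ι B.toQuadraticMap (x a)) * ι B.toQuadraticMap y
      = ∑ a', ∑ a, B (x a) ⁅y, x a'⁆ •
          (ι B.toQuadraticMap (x a) * ι B.toQuadraticMap (x a') * ι B.toQuadraticMap y) := by
        simp only [hι, Finset.sum_mul, smul_mul_assoc]
    _ = -∑ a, ∑ a', cubicTerm B (x a) (x a') y := by
        rw [Finset.sum_comm]
        simp only [cubicTerm, ← lie_skew y, map_neg, neg_smul, Finset.sum_neg_distrib]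

end CliffordAlgebra

section Inclusion

variable {L κ : Type*} [LieRing L] [Module ℂ L] {B : LinearMap.BilinForm ℂ L} {W : Submodule ℂ L}
  [Fintype κ]

theorem map_inclIsometry_eq_cubicSum (f : κ → W) :
    map (inclIsometry B W) (∑ i, ∑ j, ∑ k, B (f i : L) ⁅(f j : L), (f k : L)⁆ •
        (ι (restrictedQF B W) (f i) * ι (restrictedQF B W) (f j) * ι (restrictedQF B W) (f k)))
      = cubicSum B (fun i => (f i : L)) (fun i => (f i : L)) (fun i => (f i : L)) := by
  simp only [map_sum, map_smul, map_mul, map_apply_ι, inclIsometry_apply, cubicSum, cubicTerm]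

theorem map_inclIsometry_sum_ι_lie_mul_ι_mul_ι [DecidableEq κ] (X : Module.Basis κ ℂ W)
    (hX : ∀ i j, B (X i : L) (X j : L) = if i = j then 1 else 0) (y : L)
    (hy : ∀ i, ⁅y, (X i : L)⁆ ∈ W) :
    map (inclIsometry B W)
        (∑ i, ι (restrictedQF B W) ⟨⁅y, X i⁆, hy i⟩ * ι (restrictedQF B W) (X i))
        * ι B.toQuadraticMap y
      = -∑ k, ∑ l, cubicTerm B (X k : L) (X l : L) y := by
  simp only [map_sum, map_mul, map_apply_ι, inclIsometry_apply]
  exact sum_ι_lie_mul_ι_mul_ι _ y fun i =>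
    Submodule.coe_eq_sum_apply_smul_of_orthonormal B X hX ⟨_, hy i⟩

end Inclusion

theorem dirac_decomposition_general {L : Type*} [LieRing L] [LieAlgebra ℂ L]
    (B : LinearMap.BilinForm ℂ L)
    (hB_symm : ∀ x y : L, B x y = B y x)
    (hB_inv : ∀ x y z : L, B ⁅x, y⁆ z + B y ⁅x, z⁆ = 0)
    (H : LieSubalgebra ℂ L)
    (Hp : Submodule ℂ L)
    (hHp : ∀ x : L, x ∈ Hp ↔ ∀ y ∈ H, B y x = 0)
    (hstab : ∀ (y : H) (x : Hp), ⁅(y : L), (x : L)⁆ ∈ Hp)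
    {I : Type*} [Fintype I] [DecidableEq I] (X : Module.Basis I ℂ Hp)
    (hX : ∀ i j, B (X i : L) (X j : L) = if i = j then 1 else 0)
    {J : Type*} [Fintype J] (Y : Module.Basis J ℂ H)
    -- the combined orthonormal family of `𝔤`
    (e : I ⊕ J → L) (he : e = Sum.elim (fun i => (X i : L)) (fun j => (Y j : L)))
    -- the cubic element of `𝔤`
    (vg : CliffordAlgebra B.toQuadraticMap)
    (hvg : vg = (-(1/12 : ℂ)) • ∑ a : I ⊕ J, ∑ b : I ⊕ J, ∑ c : I ⊕ J,
        B (e a) ⁅e b, e c⁆ •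
          (ι B.toQuadraticMap (e a) * ι B.toQuadraticMap (e b) * ι B.toQuadraticMap (e c)))
    -- the cubic element `v_{𝔤/𝔥}` of `C(𝔥^⊥)`
    (v : CliffordAlgebra (restrictedQF B Hp))
    (hv : v = (-(1/12 : ℂ)) • ∑ i : I, ∑ j : I, ∑ k : I,
        B (X i : L) ⁅(X j : L), (X k : L)⁆ •
          (ι (restrictedQF B Hp) (X i) * ι (restrictedQF B Hp) (X j) *
            ι (restrictedQF B Hp) (X k)))
    -- the cubic element `v_𝔥` of `C(𝔥)`
    (vh : CliffordAlgebra (restrictedQF B H.toSubmodule))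
    (hvh : vh = (-(1/12 : ℂ)) • ∑ j : J, ∑ k : J, ∑ l : J,
        B (Y j : L) ⁅(Y k : L), (Y l : L)⁆ •
          (ι (restrictedQF B H.toSubmodule) (Y j) * ι (restrictedQF B H.toSubmodule) (Y k) *
            ι (restrictedQF B H.toSubmodule) (Y l)))
    (ν : H → CliffordAlgebra (restrictedQF B Hp))
    (hν : ∀ y : H, ν y = (1/4 : ℂ) • ∑ i : I,
        ι (restrictedQF B Hp) ⟨⁅(y : L), (X i : L)⁆, hstab y (X i)⟩ *
          ι (restrictedQF B Hp) (X i))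
    (Dg D' D'' : UniversalEnvelopingAlgebra ℂ L ⊗[ℂ] CliffordAlgebra B.toQuadraticMap)
    (hDg : Dg = ∑ i : I,
        (UniversalEnvelopingAlgebra.ι ℂ (X i : L)) ⊗ₜ[ℂ] (ι B.toQuadraticMap (X i : L))
        + ∑ j : J,
        (UniversalEnvelopingAlgebra.ι ℂ (Y j : L)) ⊗ₜ[ℂ] (ι B.toQuadraticMap (Y j : L))
        + 1 ⊗ₜ[ℂ] vg)
    (hD' : D' = ∑ i : I,
        (UniversalEnvelopingAlgebra.ι ℂ (X i : L)) ⊗ₜ[ℂ]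
          (CliffordAlgebra.map (inclIsometry B Hp) (ι (restrictedQF B Hp) (X i)))
        + 1 ⊗ₜ[ℂ] (CliffordAlgebra.map (inclIsometry B Hp) v))
    (hD'' : D'' = ∑ j : J,
        ((UniversalEnvelopingAlgebra.ι ℂ (Y j : L)) ⊗ₜ[ℂ] 1
          + 1 ⊗ₜ[ℂ] (CliffordAlgebra.map (inclIsometry B Hp) (ν (Y j))))
        * (1 ⊗ₜ[ℂ] (CliffordAlgebra.map (inclIsometry B H.toSubmodule)
            (ι (restrictedQF B H.toSubmodule) (Y j))))
        + 1 ⊗ₜ[ℂ] (CliffordAlgebra.map (inclIsometry B H.toSubmodule) vh)) :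
    Dg = D' + D'' := by
  subst hDg hD' hD''
  have hperp : ∀ (x : Hp) (y : H), B y x = 0 := fun x y => (hHp x).1 x.2 y y.2
  have hinv : B.lieInvariant L := fun x y z => eq_neg_of_add_eq_zero_left (hB_inv x y z)
  have hν_term : ∀ j, map (inclIsometry B Hp) (ν (Y j)) * ι B.toQuadraticMap (Y j : L)
      = -(1/4 : ℂ) • ∑ k, ∑ l, cubicTerm B (X k : L) (X l : L) (Y j) := fun j => by
    rw [hν, map_smul, smul_mul_assoc, map_inclIsometry_sum_ι_lie_mul_ι_mul_ι X hX, smul_neg,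
      neg_smul]
  have hcliff : vg = map (inclIsometry B Hp) v
      + ∑ j, map (inclIsometry B Hp) (ν (Y j)) * ι B.toQuadraticMap (Y j : L)
      + map (inclIsometry B H.toSubmodule) vh := by
    have hvg' : vg = -(1/12 : ℂ) • cubicSum B e e e := hvg
    rw [hvg', he, cubicSum_sumElim ⟨hB_symm⟩ hinv _ _ (fun i j => hperp (X i) (Y j))
        (fun i j k => hperp ⟨_, hstab (Y k) (X i)⟩ (Y j)),
      hv, hvh, map_smul, map_smul, map_inclIsometry_eq_cubicSum, map_inclIsometry_eq_cubicSum,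
      Finset.sum_congr rfl fun j _ => hν_term j, ← Finset.smul_sum, ← cubicSum_eq_sum_right]
    module
  rw [hcliff]
  simp only [map_apply_ι, inclIsometry_apply, Algebra.TensorProduct.tmul_mul_tmul, add_mul,
    one_mul, mul_one, tmul_add, Finset.sum_add_distrib, tmul_sum]
  abel

/-- Decomposition lemma: `D_𝔤 = D' + D''` in `U(𝔤) ⊗ C(𝔤)`. -/
theorem dirac_decomposition {L : Type*} [LieRing L] [LieAlgebra ℂ L]
    [FiniteDimensional ℂ L]
    (B : LinearMap.BilinForm ℂ L)
    (hB_symm : ∀ x y : L, B x y = B y x)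
    (hB_inv : ∀ x y z : L, B ⁅x, y⁆ z + B y ⁅x, z⁆ = 0)
    (hB_nd : B.Nondegenerate)
    (H : LieSubalgebra ℂ L)
    (hB_nd_H : ∀ y ∈ H, (∀ z ∈ H, B y z = 0) → y = 0)
    (Hp : Submodule ℂ L)
    (hHp : ∀ x : L, x ∈ Hp ↔ ∀ y ∈ H, B y x = 0)
    (hcompl : IsCompl H.toSubmodule Hp)
    (hstab : ∀ (y : H) (x : Hp), ⁅(y : L), (x : L)⁆ ∈ Hp)
    {I : Type*} [Fintype I] [DecidableEq I] (X : Module.Basis I ℂ Hp)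
    (hX : ∀ i j, B (X i : L) (X j : L) = if i = j then 1 else 0)
    {J : Type*} [Fintype J] [DecidableEq J] (Y : Module.Basis J ℂ H)
    (hY : ∀ i j, B (Y i : L) (Y j : L) = if i = j then 1 else 0)
    -- the combined orthonormal family of `𝔤`
    (e : I ⊕ J → L) (he : e = Sum.elim (fun i => (X i : L)) (fun j => (Y j : L)))
    -- the cubic element of `𝔤`
    (vg : CliffordAlgebra B.toQuadraticMap)
    (hvg : vg = (-(1/12 : ℂ)) • ∑ a : I ⊕ J, ∑ b : I ⊕ J, ∑ c : I ⊕ J,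
        B (e a) ⁅e b, e c⁆ •
          (ι B.toQuadraticMap (e a) * ι B.toQuadraticMap (e b) * ι B.toQuadraticMap (e c)))
    -- the cubic element `v_{𝔤/𝔥}` of `C(𝔥^⊥)`
    (v : CliffordAlgebra (restrictedQF B Hp))
    (hv : v = (-(1/12 : ℂ)) • ∑ i : I, ∑ j : I, ∑ k : I,
        B (X i : L) ⁅(X j : L), (X k : L)⁆ •
          (ι (restrictedQF B Hp) (X i) * ι (restrictedQF B Hp) (X j) *
            ι (restrictedQF B Hp) (X k)))
    -- the cubic element `v_𝔥` of `C(𝔥)`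
    (vh : CliffordAlgebra (restrictedQF B H.toSubmodule))
    (hvh : vh = (-(1/12 : ℂ)) • ∑ j : J, ∑ k : J, ∑ l : J,
        B (Y j : L) ⁅(Y k : L), (Y l : L)⁆ •
          (ι (restrictedQF B H.toSubmodule) (Y j) * ι (restrictedQF B H.toSubmodule) (Y k) *
            ι (restrictedQF B H.toSubmodule) (Y l)))
    (ν : H → CliffordAlgebra (restrictedQF B Hp))
    (hν : ∀ y : H, ν y = (1/4 : ℂ) • ∑ i : I,
        ι (restrictedQF B Hp) ⟨⁅(y : L), (X i : L)⁆, hstab y (X i)⟩ *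
          ι (restrictedQF B Hp) (X i))
    (Dg D' D'' : UniversalEnvelopingAlgebra ℂ L ⊗[ℂ] CliffordAlgebra B.toQuadraticMap)
    (hDg : Dg = ∑ i : I,
        (UniversalEnvelopingAlgebra.ι ℂ (X i : L)) ⊗ₜ[ℂ] (ι B.toQuadraticMap (X i : L))
        + ∑ j : J,
        (UniversalEnvelopingAlgebra.ι ℂ (Y j : L)) ⊗ₜ[ℂ] (ι B.toQuadraticMap (Y j : L))
        + 1 ⊗ₜ[ℂ] vg)
    (hD' : D' = ∑ i : I,
        (UniversalEnvelopingAlgebra.ι ℂ (X i : L)) ⊗ₜ[ℂ]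
          (CliffordAlgebra.map (inclIsometry B Hp) (ι (restrictedQF B Hp) (X i)))
        + 1 ⊗ₜ[ℂ] (CliffordAlgebra.map (inclIsometry B Hp) v))
    (hD'' : D'' = ∑ j : J,
        ((UniversalEnvelopingAlgebra.ι ℂ (Y j : L)) ⊗ₜ[ℂ] 1
          + 1 ⊗ₜ[ℂ] (CliffordAlgebra.map (inclIsometry B Hp) (ν (Y j))))
        * (1 ⊗ₜ[ℂ] (CliffordAlgebra.map (inclIsometry B H.toSubmodule)
            (ι (restrictedQF B H.toSubmodule) (Y j))))
        + 1 ⊗ₜ[ℂ] (CliffordAlgebra.map (inclIsometry B H.toSubmodule) vh)) :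
    Dg = D' + D'' :=
  dirac_decomposition_general B hB_symm hB_inv H Hp hHp hstab X hX Y e he vg hvg v hv vh hvh ν hν Dg
    D' D'' hDg hD' hD''
end
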